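/- arXiv:cond-mat/0210708 — 2 statements merged into one kernel-verified Lean document; each statement's English description precedes it below -/
import Mathlib

section
/- Let $d \geq 1$ be an integer and $\sigma^2 > 0$. Define the classical integrated density of states of a Gaussian random potential with single-site variance $C(0) = \sigma^2$ by $N_c(E) := \frac{1}{\Gamma(1+d/2)}\,(2\pi)^{-d/2}\,(2\pi\sigma^2)^{-1/2}\int_{\mathbb{R}} \big((E-v)_+\big)^{d/2}\, e^{-v^2/(2\sigma^2)}\,dv$ for $E \in \mathbb{R}$. Then $N_c(E) > 0$ for every $E$, and the leading low-energy fall-off is Gaussian: $\lim_{E \to -\infty} \frac{\log N_c(E)}{E^2} = -\frac{1}{2\sigma^2}$, i.e. $\log N_c(E) \sim -E^2/(2 C(0))$ as $E \to -\infty$. (This is the classical content of the Lifshits tail of the integrated density of states for Gaussian random potentials, for which $\log N(E) \sim \log N_c(E)$ as $E \to -\infty$.) -/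
open MeasureTheory Real Filter

/-!
Up to a positive constant, `N_c(E)` is the truncated moment `∫ (E - v)₊ ^ p * exp (-b v²) dv`
with `p = d/2` and `b = 1/(2σ²)`. Restricting the integral to `[E - 2, E - 1]` bounds it below by
`exp (-b (|E| + 2)²)`. For `E ≤ 0`, on `{v ≤ E}` one has `v² ≥ E² + (v - E)²`, which
bounds it above by its value at `0` times `exp (-b E²)`. Both bounds have logarithm
`-b E² + O(|E|)`.
-/

lemma tendsto_quadratic_div_sq_atBot (a c d : ℝ) :
    Tendsto (fun x : ℝ => (a + c * x + d * x ^ 2) / x ^ 2) atBot (nhds d) := by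
  have h : Tendsto (fun x : ℝ => a * x⁻¹ ^ 2 + c * x⁻¹ + d) atBot
      (nhds (a * 0 ^ 2 + c * 0 + d)) :=
    (((tendsto_inv_atBot_zero.pow 2).const_mul a).add
      (tendsto_inv_atBot_zero.const_mul c)).add_const d
  rw [show a * 0 ^ 2 + c * 0 + d = d by ring] at h
  refine h.congr' ?_
  filter_upwards [eventually_lt_atBot 0] with x hx
  field_simp [hx.ne]

noncomputable def truncatedMoment (b p E : ℝ) : ℝ :=
  ∫ v : ℝ, max (E - v) 0 ^ p * exp (-b * v ^ 2)

section

variable {b p : ℝ}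

lemma integrable_max_neg_rpow_mul_exp_neg_mul_sq (hb : 0 < b) (hp : 0 < p) :
    Integrable fun v : ℝ => max (-v) 0 ^ p * exp (-b * v ^ 2) := by
  have hpos : Integrable ((Set.Ioi 0).indicator fun u : ℝ => u ^ p * exp (-b * u ^ 2)) :=
    (integrableOn_rpow_mul_exp_neg_mul_sq hb (by linarith)).integrable_indicator measurableSet_Ioi
  convert hpos.comp_neg using 2 with v
  rcases lt_or_ge 0 (-v) with hv | hv
  · simp [Set.indicator_of_mem (Set.mem_Ioi.mpr hv), max_eq_left hv.le]
  · simp [Set.indicator_of_notMem (Set.notMem_Ioi.mpr hv), max_eq_right hv, zero_rpow hp.ne']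

lemma integrable_max_sub_rpow_mul_exp_neg_mul_sq (hb : 0 < b) (hp : 0 < p) (E : ℝ) :
    Integrable fun v : ℝ => max (E - v) 0 ^ p * exp (-b * v ^ 2) := by
  have hdom := ((integrable_max_neg_rpow_mul_exp_neg_mul_sq (half_pos hb) hp).comp_sub_right E
    ).const_mul (exp (b * E ^ 2))
  refine hdom.mono' (by fun_prop) (ae_of_all _ fun v => ?_)
  rw [norm_of_nonneg (by positivity), neg_sub, mul_left_comm, ← exp_add]
  gcongr
  -- `2 v² + 2 E² - (v - E)² = (v + E)²`
  nlinarith [sq_nonneg (v + E)]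

lemma exp_neg_mul_sq_le_truncatedMoment (hb : 0 < b) (hp : 0 < p) (E : ℝ) :
    exp (-b * (|E| + 2) ^ 2) ≤ truncatedMoment b p E := by
  have hint := integrable_max_sub_rpow_mul_exp_neg_mul_sq hb hp E
  calc exp (-b * (|E| + 2) ^ 2)
      = exp (-b * (|E| + 2) ^ 2) * volume.real (Set.Icc (E - 2) (E - 1)) := by norm_num
    _ ≤ ∫ v in Set.Icc (E - 2) (E - 1), max (E - v) 0 ^ p * exp (-b * v ^ 2) := by
      refine setIntegral_ge_of_const_le_real measurableSet_Icc measure_Icc_lt_top.ne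
        (fun v ⟨hv₁, hv₂⟩ => ?_) hint.integrableOn
      have hv : v ^ 2 ≤ (|E| + 2) ^ 2 :=
        sq_le_sq' (by linarith [neg_abs_le E]) (by linarith [le_abs_self E])
      calc exp (-b * (|E| + 2) ^ 2) = 1 * exp (-b * (|E| + 2) ^ 2) := (one_mul _).symm
        _ ≤ max (E - v) 0 ^ p * exp (-b * v ^ 2) :=
          mul_le_mul (one_le_rpow (le_max_of_le_left (by linarith)) hp.le)
            (exp_le_exp.mpr (by nlinarith)) (by positivity) (by positivity)
    _ ≤ truncatedMoment b p E :=
      setIntegral_le_integral hint (ae_of_all _ fun v => by positivity)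

lemma truncatedMoment_pos (hb : 0 < b) (hp : 0 < p) (E : ℝ) : 0 < truncatedMoment b p E :=
  (exp_pos _).trans_le (exp_neg_mul_sq_le_truncatedMoment hb hp E)

lemma truncatedMoment_le_truncatedMoment_zero_mul_exp (hb : 0 < b) (hp : 0 < p) {E : ℝ}
    (hE : E ≤ 0) :
    truncatedMoment b p E ≤ truncatedMoment b p 0 * exp (-b * E ^ 2) := by
  have hshift : truncatedMoment b p 0 =
      ∫ v : ℝ, max (-(v - E)) 0 ^ p * exp (-b * (v - E) ^ 2) := by
    simp only [truncatedMoment, zero_sub]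
    exact (integral_sub_right_eq_self (fun v : ℝ => max (-v) 0 ^ p * exp (-b * v ^ 2)) E).symm
  rw [hshift, ← integral_mul_const]
  refine integral_mono_of_nonneg (ae_of_all _ fun v => by positivity)
    (((integrable_max_neg_rpow_mul_exp_neg_mul_sq hb hp).comp_sub_right E).mul_const _)
    (ae_of_all _ fun v => ?_)
  dsimp only
  rw [neg_sub, mul_assoc, ← exp_add]
  rcases le_total (E - v) 0 with hv | hv
  · simp [max_eq_right hv, zero_rpow hp.ne']
  · gcongr
    -- `v² - (v - E)² - E² = -2 E (E - v) ≥ 0`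
    nlinarith [mul_nonneg (neg_nonneg.mpr hE) hv]

lemma tendsto_log_const_mul_truncatedMoment_div_sq {c : ℝ} (hb : 0 < b) (hp : 0 < p)
    (hc : 0 < c) :
    Tendsto (fun E => log (c * truncatedMoment b p E) / E ^ 2) atBot (nhds (-b)) := by
  have hI0 := truncatedMoment_pos hb hp 0
  refine tendsto_of_tendsto_of_tendsto_of_le_of_le'
    (tendsto_quadratic_div_sq_atBot (log c - 4 * b) (4 * b) (-b))
    (tendsto_quadratic_div_sq_atBot (log c + log (truncatedMoment b p 0)) 0 (-b)) ?_ ?_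
  all_goals
    filter_upwards [eventually_lt_atBot 0] with E hE
    gcongr
    rw [log_mul hc.ne' (truncatedMoment_pos hb hp E).ne']
  · have h := log_le_log (exp_pos _) (exp_neg_mul_sq_le_truncatedMoment hb hp E)
    rw [log_exp, abs_of_neg hE] at h
    linarith
  · have h := log_le_log (truncatedMoment_pos hb hp E)
      (truncatedMoment_le_truncatedMoment_zero_mul_exp hb hp hE.le)
    rw [log_mul hI0.ne' (exp_pos _).ne', log_exp] at h
    linarith

end

/-- Gaussian Lifshits tail (classical content): for the classical integrated density of
states `N_c` of a Gaussian random potential with single-site variance `σ2 = C(0) > 0`,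
one has `N_c(E) > 0` for every `E` and `log N_c(E) / E² → -1/(2 C(0))` as `E → -∞`,
i.e. `log N_c(E) ~ -E²/(2C(0))`. -/
theorem gaussian_classical_lifshits_tail (d : ℕ) (hd : 1 ≤ d) (σ2 : ℝ) (hσ : 0 < σ2)
    (Nc : ℝ → ℝ)
    (hNc : ∀ E : ℝ, Nc E =
      (Real.Gamma (1 + (d : ℝ) / 2))⁻¹ * (2 * Real.pi) ^ (-(d : ℝ) / 2) *
        (2 * Real.pi * σ2) ^ (-(1 : ℝ) / 2) *
        ∫ v : ℝ, (max (E - v) 0) ^ ((d : ℝ) / 2) * Real.exp (-v ^ 2 / (2 * σ2))) :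
    (∀ E : ℝ, 0 < Nc E) ∧
    Tendsto (fun E : ℝ => Real.log (Nc E) / E ^ 2) atBot (nhds (-(1 / (2 * σ2)))) := by
  set c := (Real.Gamma (1 + (d : ℝ) / 2))⁻¹ * (2 * Real.pi) ^ (-(d : ℝ) / 2) *
    (2 * Real.pi * σ2) ^ (-(1 : ℝ) / 2)
  have hc : 0 < c := by
    have := Real.Gamma_pos_of_pos (by positivity : (0 : ℝ) < 1 + d / 2)
    positivity
  have hb : 0 < 1 / (2 * σ2) := by positivity
  have hp : (0 : ℝ) < d / 2 := by
    have : (1 : ℝ) ≤ d := by exact_mod_cast hd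
    linarith
  have hNc' : Nc = fun E => c * truncatedMoment (1 / (2 * σ2)) (d / 2) E := by
    ext E
    rw [hNc, truncatedMoment]
    congr! 5 with v
    ring
  rw [hNc']
  exact ⟨fun E => mul_pos hc (truncatedMoment_pos hb hp E),
    tendsto_log_const_mul_truncatedMoment_div_sq hb hp hc⟩
end

section
/- Let $B > 0$ and $l \in \mathbb{N}_0$, and fix $y \in \mathbb{R}^2$. Then the function $f := K_l(\cdot, y) : \mathbb{R}^2 \to \mathbb{C}$ is smooth and is a generalized eigenfunction of the Landau Hamiltonian with eigenvalue the $l$-th Landau level $(l + \tfrac{1}{2})B$: for all $x = (x_1,x_2) \in \mathbb{R}^2$, $\tfrac{1}{2}\Big[-\tfrac{\partial^2 f}{\partial x_1^2}(x) - \tfrac{\partial^2 f}{\partial x_2^2}(x) + \mathrm{i}B\big(x_1 \tfrac{\partial f}{\partial x_2}(x) - x_2 \tfrac{\partial f}{\partial x_1}(x)\big) + \tfrac{B^2}{4}|x|^2 f(x)\Big] = B\big(l + \tfrac{1}{2}\big) f(x)$. (The left-hand side is the expansion of $\tfrac{1}{2}\big[(\mathrm{i}\partial_{x_1} - \tfrac{B}{2}x_2)^2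 + (\mathrm{i}\partial_{x_2} + \tfrac{B}{2}x_1)^2\big]f$, the Landau Hamiltonian in the symmetric gauge.) -/
open MeasureTheory Real

/-- The `l`-th Laguerre polynomial `L_l(ξ) = ∑_{k=0}^{l} (l choose k) (-ξ)^k / k!`. -/
noncomputable def laguerre (l : ℕ) (ξ : ℝ) : ℝ :=
  ∑ k ∈ Finset.range (l + 1), (l.choose k : ℝ) * (-ξ) ^ k / (Nat.factorial k : ℝ)

/-- The `l`-th Landau-level kernel
`K_l(x,y) = (B/2π) exp[i(B/2)(x₂y₁ - x₁y₂) - (B/4)|x-y|²] L_l((B/2)|x-y|²)`. -/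
noncomputable def landauKernel (B : ℝ) (l : ℕ) (x y : ℝ × ℝ) : ℂ :=
  ((B / (2 * Real.pi) : ℝ) : ℂ) *
    Complex.exp (Complex.I * ((B / 2 * (x.2 * y.1 - x.1 * y.2) : ℝ) : ℂ) -
      ((B / 4 * ((x.1 - y.1) ^ 2 + (x.2 - y.2) ^ 2) : ℝ) : ℂ)) *
    ((laguerre l (B / 2 * ((x.1 - y.1) ^ 2 + (x.2 - y.2) ^ 2)) : ℝ) : ℂ)

/-- Partial derivative with respect to the first variable of a function on `ℝ × ℝ`. -/
noncomputable def pd1 (f : ℝ × ℝ → ℂ) : ℝ × ℝ → ℂ :=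
  fun x => deriv (fun t : ℝ => f (t, x.2)) x.1

/-- Partial derivative with respect to the second variable of a function on `ℝ × ℝ`. -/
noncomputable def pd2 (f : ℝ × ℝ → ℂ) : ℝ × ℝ → ℂ :=
  fun x => deriv (fun t : ℝ => f (x.1, t)) x.2

open Polynomial in
noncomputable def lagP (l : ℕ) : Polynomial ℝ :=
  ∑ k ∈ Finset.range (l + 1),
    Polynomial.C ((-1 : ℝ) ^ k * (l.choose k : ℝ) / (Nat.factorial k : ℝ)) * Polynomial.X ^ k

open Polynomial in
lemma laguerre_eq (l : ℕ) (ξ : ℝ) : laguerre l ξ = (lagP l).eval ξ := by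
  simp only [laguerre, lagP, eval_finset_sum, eval_mul, eval_C, eval_pow, eval_X]
  refine Finset.sum_congr rfl fun k _ => ?_
  rw [neg_pow]
  ring

open Polynomial in
lemma coeff_lagP (l n : ℕ) :
    (lagP l).coeff n = (-1 : ℝ) ^ n * (l.choose n : ℝ) / (Nat.factorial n : ℝ) := by
  simp only [lagP, finset_sum_coeff, coeff_C_mul, coeff_X_pow, mul_ite, mul_one, mul_zero]
  rw [Finset.sum_ite_eq (Finset.range (l+1)) n]
  by_cases h : n ∈ Finset.range (l + 1)
  · simp [h]
  · simp only [h, if_false]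
    rw [Finset.mem_range, not_lt] at h
    rw [Nat.choose_eq_zero_of_lt (by omega)]
    simp

open Polynomial in
lemma lagP_ode (l : ℕ) :
    X * derivative (derivative (lagP l)) + (1 - X) * derivative (lagP l)
      + C (l : ℝ) * lagP l = 0 := by
  ext n
  simp only [coeff_add, coeff_zero, sub_mul, one_mul, coeff_sub, coeff_C_mul]
  have hXd2 : (X * derivative (derivative (lagP l))).coeff n
      = (n : ℝ) * ((n : ℝ) + 1) * (lagP l).coeff (n + 1) := by
    cases n with
    | zero => simp [coeff_X_mul_zero]
    | succ m =>
      rw [coeff_X_mul, coeff_derivative, coeff_derivative]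
      push_cast; ring
  have hXd1 : (X * derivative (lagP l)).coeff n = (n : ℝ) * (lagP l).coeff n := by
    cases n with
    | zero => simp [coeff_X_mul_zero]
    | succ m =>
      rw [coeff_X_mul, coeff_derivative]
      push_cast; ring
  rw [hXd2, hXd1, coeff_derivative, coeff_lagP, coeff_lagP]
  rcases le_or_gt l n with h | h
  · rcases eq_or_lt_of_le h with rfl | h'
    · rw [Nat.choose_eq_zero_of_lt (by omega), Nat.choose_self]
      push_cast; ring
    · rw [Nat.choose_eq_zero_of_lt (by omega), Nat.choose_eq_zero_of_lt (by omega)]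
      push_cast; ring
  · have key : ((l.choose (n+1) : ℝ)) * ((n:ℝ) + 1) = (l.choose n : ℝ) * ((l : ℝ) - n) := by
      have h0 := Nat.choose_succ_right_eq l n
      zify [h.le] at h0
      exact_mod_cast h0
    have hn1 : ((n:ℝ) + 1) ≠ 0 := by positivity
    have hC : (l.choose (n+1) : ℝ) = (l.choose n : ℝ) * ((l : ℝ) - n) / ((n:ℝ)+1) := by
      field_simp
      linarith [key]
    have hfac : (Nat.factorial (n+1) : ℝ) = ((n:ℝ)+1) * (Nat.factorial n : ℝ) := by
      push_cast [Nat.factorial_succ]; ring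
    have hfn : (Nat.factorial n : ℝ) ≠ 0 := Nat.cast_ne_zero.2 (Nat.factorial_ne_zero n)
    rw [hC, hfac, pow_succ]
    field_simp
    ring

/-- The kernel written with the Laguerre polynomial as a `Polynomial ℝ` argument. -/
noncomputable def Ff (B : ℝ) (y : ℝ × ℝ) (q : Polynomial ℝ) (x : ℝ × ℝ) : ℂ :=
  ((B / (2 * Real.pi) : ℝ) : ℂ) *
    Complex.exp (Complex.I * ((B / 2 * (x.2 * y.1 - x.1 * y.2) : ℝ) : ℂ) -
      ((B / 4 * ((x.1 - y.1) ^ 2 + (x.2 - y.2) ^ 2) : ℝ) : ℂ)) *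
    ((q.eval (B / 2 * ((x.1 - y.1) ^ 2 + (x.2 - y.2) ^ 2)) : ℝ) : ℂ)

lemma landau_eq_Ff (B : ℝ) (l : ℕ) (y : ℝ × ℝ) :
    (fun x => landauKernel B l x y) = Ff B y (lagP l) := by
  funext x
  simp [landauKernel, Ff, laguerre_eq]

noncomputable def dF1 (B : ℝ) (y : ℝ × ℝ) (q : Polynomial ℝ) (x : ℝ × ℝ) : ℂ :=
  (Complex.I * ((-(B/2*y.2) : ℝ) : ℂ) - ((B/2*(x.1-y.1) : ℝ) : ℂ)) * Ff B y q x
    + ((B*(x.1-y.1) : ℝ) : ℂ) * Ff B y (Polynomial.derivative q) x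

noncomputable def dF2 (B : ℝ) (y : ℝ × ℝ) (q : Polynomial ℝ) (x : ℝ × ℝ) : ℂ :=
  (Complex.I * ((B/2*y.1 : ℝ) : ℂ) - ((B/2*(x.2-y.2) : ℝ) : ℂ)) * Ff B y q x
    + ((B*(x.2-y.2) : ℝ) : ℂ) * Ff B y (Polynomial.derivative q) x

lemma hasDerivAt_Ff1 (B : ℝ) (y : ℝ × ℝ) (q : Polynomial ℝ) (x : ℝ × ℝ) :
    HasDerivAt (fun t : ℝ => Ff B y q (t, x.2)) (dF1 B y q x) x.1 := by
  have hA : HasDerivAt (fun t : ℝ => B/2*(x.2*y.1 - t*y.2)) (-(B/2*y.2)) x.1 := by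
    have h := (((hasDerivAt_id x.1).mul_const y.2).const_sub (x.2*y.1)).const_mul (B/2)
    refine h.congr_deriv ?_
    ring
  have hr : HasDerivAt (fun t : ℝ => (t-y.1)^2 + (x.2-y.2)^2) (2*(x.1-y.1)) x.1 := by
    have h := (((hasDerivAt_id x.1).sub_const y.1).pow 2).add_const ((x.2-y.2)^2)
    refine h.congr_deriv ?_
    simp only [id_eq]
    push_cast
    ring
  have hφ : HasDerivAt (fun t : ℝ => Complex.I * ((B/2*(x.2*y.1 - t*y.2) : ℝ) : ℂ)
      - ((B/4*((t-y.1)^2+(x.2-y.2)^2) : ℝ) : ℂ))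
      (Complex.I * ((-(B/2*y.2) : ℝ) : ℂ) - ((B/4*(2*(x.1-y.1)) : ℝ) : ℂ)) x.1 :=
    (hA.ofReal_comp.const_mul Complex.I).sub ((hr.const_mul (B/4)).ofReal_comp)
  have hQ : HasDerivAt (fun t : ℝ => ((q.eval (B/2*((t-y.1)^2+(x.2-y.2)^2)) : ℝ) : ℂ))
      (((Polynomial.derivative q).eval (B/2*((x.1-y.1)^2+(x.2-y.2)^2))
        * (B/2*(2*(x.1-y.1))) : ℝ) : ℂ) x.1 := by
    have hξ : HasDerivAt (fun t : ℝ => B/2*((t-y.1)^2+(x.2-y.2)^2)) (B/2*(2*(x.1-y.1))) x.1 :=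
      hr.const_mul (B/2)
    exact ((q.hasDerivAt _).comp x.1 hξ).ofReal_comp
  have h := (hφ.cexp.const_mul (((B/(2*Real.pi)) : ℝ) : ℂ)).mul hQ
  simp only [Ff, dF1]
  refine h.congr_deriv ?_
  push_cast
  ring

lemma hasDerivAt_Ff2 (B : ℝ) (y : ℝ × ℝ) (q : Polynomial ℝ) (x : ℝ × ℝ) :
    HasDerivAt (fun t : ℝ => Ff B y q (x.1, t)) (dF2 B y q x) x.2 := by
  have hA : HasDerivAt (fun t : ℝ => B/2*(t*y.1 - x.1*y.2)) (B/2*y.1) x.2 := by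
    have h := (((hasDerivAt_id x.2).mul_const y.1).sub_const (x.1*y.2)).const_mul (B/2)
    refine h.congr_deriv ?_
    ring
  have hr : HasDerivAt (fun t : ℝ => (x.1-y.1)^2 + (t-y.2)^2) (2*(x.2-y.2)) x.2 := by
    have h := ((((hasDerivAt_id x.2).sub_const y.2).pow 2).const_add ((x.1-y.1)^2))
    refine h.congr_deriv ?_
    simp only [id_eq]
    push_cast
    ring
  have hφ : HasDerivAt (fun t : ℝ => Complex.I * ((B/2*(t*y.1 - x.1*y.2) : ℝ) : ℂ)
      - ((B/4*((x.1-y.1)^2+(t-y.2)^2) : ℝ) : ℂ))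
      (Complex.I * ((B/2*y.1 : ℝ) : ℂ) - ((B/4*(2*(x.2-y.2)) : ℝ) : ℂ)) x.2 :=
    (hA.ofReal_comp.const_mul Complex.I).sub ((hr.const_mul (B/4)).ofReal_comp)
  have hQ : HasDerivAt (fun t : ℝ => ((q.eval (B/2*((x.1-y.1)^2+(t-y.2)^2)) : ℝ) : ℂ))
      (((Polynomial.derivative q).eval (B/2*((x.1-y.1)^2+(x.2-y.2)^2))
        * (B/2*(2*(x.2-y.2))) : ℝ) : ℂ) x.2 := by
    have hξ : HasDerivAt (fun t : ℝ => B/2*((x.1-y.1)^2+(t-y.2)^2)) (B/2*(2*(x.2-y.2))) x.2 :=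
      hr.const_mul (B/2)
    exact ((q.hasDerivAt _).comp x.2 hξ).ofReal_comp
  have h := (hφ.cexp.const_mul (((B/(2*Real.pi)) : ℝ) : ℂ)).mul hQ
  simp only [Ff, dF2]
  refine h.congr_deriv ?_
  push_cast
  ring

lemma pd1_Ff (B : ℝ) (y : ℝ × ℝ) (q : Polynomial ℝ) :
    pd1 (Ff B y q) = dF1 B y q :=
  funext fun x => (hasDerivAt_Ff1 B y q x).deriv

lemma pd2_Ff (B : ℝ) (y : ℝ × ℝ) (q : Polynomial ℝ) :
    pd2 (Ff B y q) = dF2 B y q :=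
  funext fun x => (hasDerivAt_Ff2 B y q x).deriv

lemma pd1_dF1 (B : ℝ) (y : ℝ × ℝ) (q : Polynomial ℝ) (x : ℝ × ℝ) :
    pd1 (dF1 B y q) x =
      (-((B/2 : ℝ) : ℂ) * Ff B y q x
        + (Complex.I * ((-(B/2*y.2) : ℝ) : ℂ) - ((B/2*(x.1-y.1) : ℝ) : ℂ)) * dF1 B y q x)
      + (((B : ℝ) : ℂ) * Ff B y (Polynomial.derivative q) x
        + ((B*(x.1-y.1) : ℝ) : ℂ) * dF1 B y (Polynomial.derivative q) x) := by
  have hc1 : HasDerivAt (fun t : ℝ => Complex.I * ((-(B/2*y.2) : ℝ) : ℂ)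
      - ((B/2*(t-y.1) : ℝ) : ℂ)) (-((B/2 : ℝ) : ℂ)) x.1 := by
    have hg : HasDerivAt (fun t : ℝ => B/2*(t-y.1)) (B/2) x.1 := by
      have h := ((hasDerivAt_id x.1).sub_const y.1).const_mul (B/2)
      refine h.congr_deriv ?_
      ring
    exact (hg.ofReal_comp).const_sub _
  have hb1 : HasDerivAt (fun t : ℝ => ((B*(t-y.1) : ℝ) : ℂ)) ((B : ℝ) : ℂ) x.1 := by
    have hg : HasDerivAt (fun t : ℝ => B*(t-y.1)) B x.1 := by
      have h := ((hasDerivAt_id x.1).sub_const y.1).const_mul B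
      refine h.congr_deriv ?_
      ring
    exact hg.ofReal_comp
  have h := (hc1.mul (hasDerivAt_Ff1 B y q x)).add
    (hb1.mul (hasDerivAt_Ff1 B y (Polynomial.derivative q) x))
  exact h.deriv

lemma pd2_dF2 (B : ℝ) (y : ℝ × ℝ) (q : Polynomial ℝ) (x : ℝ × ℝ) :
    pd2 (dF2 B y q) x =
      (-((B/2 : ℝ) : ℂ) * Ff B y q x
        + (Complex.I * ((B/2*y.1 : ℝ) : ℂ) - ((B/2*(x.2-y.2) : ℝ) : ℂ)) * dF2 B y q x)
      + (((B : ℝ) : ℂ) * Ff B y (Polynomial.derivative q) x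
        + ((B*(x.2-y.2) : ℝ) : ℂ) * dF2 B y (Polynomial.derivative q) x) := by
  have hc2 : HasDerivAt (fun t : ℝ => Complex.I * ((B/2*y.1 : ℝ) : ℂ)
      - ((B/2*(t-y.2) : ℝ) : ℂ)) (-((B/2 : ℝ) : ℂ)) x.2 := by
    have hg : HasDerivAt (fun t : ℝ => B/2*(t-y.2)) (B/2) x.2 := by
      have h := ((hasDerivAt_id x.2).sub_const y.2).const_mul (B/2)
      refine h.congr_deriv ?_
      ring
    exact (hg.ofReal_comp).const_sub _
  have hb2 : HasDerivAt (fun t : ℝ => ((B*(t-y.2) : ℝ) : ℂ)) ((B : ℝ) : ℂ) x.2 := by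
    have hg : HasDerivAt (fun t : ℝ => B*(t-y.2)) B x.2 := by
      have h := ((hasDerivAt_id x.2).sub_const y.2).const_mul B
      refine h.congr_deriv ?_
      ring
    exact hg.ofReal_comp
  have h := (hc2.mul (hasDerivAt_Ff2 B y q x)).add
    (hb2.mul (hasDerivAt_Ff2 B y (Polynomial.derivative q) x))
  exact h.deriv

lemma smooth_landau (B : ℝ) (l : ℕ) (y : ℝ × ℝ) :
    ContDiff ℝ (⊤ : ℕ∞) (fun x : ℝ × ℝ => landauKernel B l x y) := by
  have hlag : ContDiff ℝ (⊤ : ℕ∞)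
      (fun x : ℝ × ℝ => laguerre l (B / 2 * ((x.1 - y.1) ^ 2 + (x.2 - y.2) ^ 2))) := by
    have h : ContDiff ℝ (⊤ : ℕ∞) (fun x : ℝ × ℝ => ∑ k ∈ Finset.range (l + 1),
        (l.choose k : ℝ) * (-(B / 2 * ((x.1 - y.1) ^ 2 + (x.2 - y.2) ^ 2))) ^ k
          / (Nat.factorial k : ℝ)) :=
      ContDiff.sum fun k _ => ContDiff.div_const (by fun_prop) _
    simpa [laguerre] using h
  unfold landauKernel
  apply ContDiff.mul
  · apply ContDiff.mul contDiff_const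
    apply Complex.contDiff_exp.comp
    have hg1 : ContDiff ℝ (⊤ : ℕ∞) (fun x : ℝ × ℝ => B / 2 * (x.2 * y.1 - x.1 * y.2)) := by fun_prop
    have hg2 : ContDiff ℝ (⊤ : ℕ∞) (fun x : ℝ × ℝ => B / 4 * ((x.1 - y.1) ^ 2 + (x.2 - y.2) ^ 2)) := by
      fun_prop
    exact (contDiff_const.mul (Complex.ofRealCLM.contDiff.comp hg1)).sub
      (Complex.ofRealCLM.contDiff.comp hg2)
  · exact Complex.ofRealCLM.contDiff.comp hlag

open Polynomial in
lemma ode_at (B : ℝ) (l : ℕ) (y x : ℝ × ℝ) :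
    ((B / 2 * ((x.1 - y.1) ^ 2 + (x.2 - y.2) ^ 2) : ℝ) : ℂ)
        * Ff B y (derivative (derivative (lagP l))) x
      + (1 - ((B / 2 * ((x.1 - y.1) ^ 2 + (x.2 - y.2) ^ 2) : ℝ) : ℂ))
        * Ff B y (derivative (lagP l)) x
      + (l : ℂ) * Ff B y (lagP l) x = 0 := by
  set ξ : ℝ := B / 2 * ((x.1 - y.1) ^ 2 + (x.2 - y.2) ^ 2) with hξ
  have hr0 : ξ * (derivative (derivative (lagP l))).eval ξ
      + (1 - ξ) * (derivative (lagP l)).eval ξ + (l : ℝ) * (lagP l).eval ξ = 0 := by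
    have h := congrArg (Polynomial.eval ξ) (lagP_ode l)
    simpa using h
  have hC : (ξ : ℂ) * ((derivative (derivative (lagP l))).eval ξ : ℝ)
      + (1 - (ξ : ℂ)) * ((derivative (lagP l)).eval ξ : ℝ)
      + (l : ℂ) * ((lagP l).eval ξ : ℝ) = 0 := by
    exact_mod_cast congrArg (fun r : ℝ => (r : ℂ)) hr0
  simp only [Ff]
  linear_combination (((B / (2 * Real.pi) : ℝ) : ℂ) *
    Complex.exp (Complex.I * ((B / 2 * (x.2 * y.1 - x.1 * y.2) : ℝ) : ℂ) -
      ((B / 4 * ((x.1 - y.1) ^ 2 + (x.2 - y.2) ^ 2) : ℝ) : ℂ))) * hC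


/-- For fixed `y`, the function `x ↦ K_l(x,y)` is smooth and is a generalized
eigenfunction of the Landau Hamiltonian (in the symmetric gauge) with eigenvalue the
`l`-th Landau level `(l + 1/2)B`. -/
theorem landauKernel_generalized_eigenfunction (B : ℝ) (hB : 0 < B) (l : ℕ)
    (y : ℝ × ℝ) (f : ℝ × ℝ → ℂ) (hf : f = fun x => landauKernel B l x y) :
    ContDiff ℝ (⊤ : ℕ∞) f ∧
    ∀ x : ℝ × ℝ,
      (1 / 2 : ℂ) *
        (-(pd1 (pd1 f) x) - pd2 (pd2 f) x +
          Complex.I * (B : ℂ) * ((x.1 : ℂ) * pd2 f x - (x.2 : ℂ) * pd1 f x) +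
          (((B ^ 2 / 4) * (x.1 ^ 2 + x.2 ^ 2) : ℝ) : ℂ) * f x)
        = (B : ℂ) * ((l : ℂ) + 1 / 2) * f x := by
  subst hf
  constructor
  · exact smooth_landau B l y
  · intro x
    rw [landau_eq_Ff]
    rw [pd1_Ff, pd2_Ff, pd1_dF1, pd2_dF2]
    simp only [dF1, dF2]
    have hode := ode_at B l y x
    push_cast at hode ⊢
    linear_combination (Ff B y (lagP l) x * ((B:ℂ)^2/4*((x.1:ℂ)*(y.1:ℂ) + (x.2:ℂ)*(y.2:ℂ))
      - (B:ℂ)^2/8*((y.1:ℂ)^2+(y.2:ℂ)^2))) * Complex.I_sq + (-(B:ℂ)) * hode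
end
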